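/- For a discrete space X, the socle C_F(X) = {f ∈ C(X) : coz(f) is finite} is a countable strongly annihilated ideal of C(X) if and only if X is finite. -/

import Mathlib

open ContinuousMap

/-- An ideal `I` is countable strongly annihilated if for each countable subset `S ⊆ I`
and each `b ∉ I` there exists `c` with `c * a = 0` for all `a ∈ S` but `c * b ≠ 0`. -/
def CountableStronglyAnnihilated {R : Type*} [CommRing R] (I : Ideal R) : Prop :=
  ∀ S : Set R, S.Countable → S ⊆ I → ∀ b ∉ I, ∃ c : R, (∀ a ∈ S, c * a = 0) ∧ c * b ≠ 0

/-- The socle `C_F(X) = {f ∈ C(X) : coz(f) is finite}`. -/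
def CF (X : Type*) [TopologicalSpace X] : Ideal C(X, ℝ) where
  carrier := {f | {x | f x ≠ 0}.Finite}
  zero_mem' := by simp
  add_mem' := by
    intro f g hf hg
    refine (hf.union hg).subset ?_
    intro x hx
    by_contra hx'
    simp only [Set.mem_union, Set.mem_setOf_eq, not_or, not_not] at hx'
    apply hx
    simp [hx'.1, hx'.2]
  smul_mem' := by
    intro c f hf
    refine hf.subset ?_
    intro x hx
    simp only [Set.mem_setOf_eq] at *
    intro h
    exact hx (by simp [h])

/-!
If `X` is finite, `C_F(X)` is the whole ring and the condition is vacuous. If `X` is infinite,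
pick a countably infinite `s ⊆ X`. Every `c` killing all the point indicators `1_{x}`, `x ∈ s`,
vanishes on `s` and hence kills `1_s`, which is not in `C_F(X)`.
-/

theorem countableStronglyAnnihilated_top {R : Type*} [CommRing R] :
    CountableStronglyAnnihilated (⊤ : Ideal R) :=
  fun _ _ _ _ hb => absurd Submodule.mem_top hb

section CF

variable {X : Type*} [TopologicalSpace X]

theorem mem_CF_iff {f : C(X, ℝ)} : f ∈ CF X ↔ (Function.support f).Finite :=
  Iff.rfl

theorem CF_eq_top [Finite X] : CF X = ⊤ :=
  (Ideal.eq_top_iff_one _).2 (mem_CF_iff.2 (Set.toFinite _))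

variable [DiscreteTopology X]

noncomputable def discreteIndicator (s : Set X) : C(X, ℝ) :=
  ⟨s.indicator 1, continuous_of_discreteTopology⟩

@[simp]
theorem coe_discreteIndicator (s : Set X) : ⇑(discreteIndicator s) = s.indicator 1 :=
  rfl

theorem discreteIndicator_mem_CF_iff {s : Set X} : discreteIndicator s ∈ CF X ↔ s.Finite := by
  rw [mem_CF_iff, coe_discreteIndicator, Set.support_indicator, Function.support_one,
    Set.inter_univ]

theorem mul_discreteIndicator_eq_zero_iff {c : C(X, ℝ)} {s : Set X} :
    c * discreteIndicator s = 0 ↔ ∀ x ∈ s, c x = 0 := by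
  simp [ContinuousMap.ext_iff, or_iff_not_imp_right]

theorem not_countableStronglyAnnihilated_CF {s : Set X} (hc : s.Countable) (hi : s.Infinite) :
    ¬ CountableStronglyAnnihilated (CF X) := by
  intro h
  have hpoints : (fun x => discreteIndicator {x}) '' s ⊆ CF X := by
    rintro _ ⟨x, -, rfl⟩
    exact discreteIndicator_mem_CF_iff.2 (Set.finite_singleton x)
  obtain ⟨c, hkill, hb⟩ := h _ (hc.image _) hpoints (discreteIndicator s)
    (mt discreteIndicator_mem_CF_iff.1 hi)
  refine hb (mul_discreteIndicator_eq_zero_iff.2 fun x hx => ?_)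
  exact mul_discreteIndicator_eq_zero_iff.1 (hkill _ ⟨x, hx, rfl⟩) x rfl

end CF

/-- For a discrete space `X`, the socle `C_F(X)` is a countable strongly annihilated
ideal of `C(X)` iff `X` is finite. -/
theorem stmt19 {X : Type*} [TopologicalSpace X] [DiscreteTopology X] :
    CountableStronglyAnnihilated (CF X) ↔ Finite X := by
  refine ⟨fun h => ?_, fun _ => CF_eq_top (X := X) ▸ countableStronglyAnnihilated_top⟩
  rw [← not_infinite_iff_finite]
  intro
  let e := Infinite.natEmbedding X
  exact not_countableStronglyAnnihilated_CF (Set.countable_range e)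
    (Set.infinite_range_of_injective e.injective) h
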